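/- Cassel's inequality: let (a_i), (b_i), (w_i) be nonnegative n-tuples with b_i > 0 and p ≥ a_i/b_i ≥ q for some p, q > 0. Then (∑ w_i a_i²)^{1/2}·(∑ w_i b_i²)^{1/2} ≤ ((p+q)/(2√(pq)))·∑ w_i a_i b_i. -/
import Mathlib


theorem cassel_inequality {n : ℕ} (a b w : Fin n → ℝ)
    (ha : ∀ i, 0 ≤ a i) (hb : ∀ i, 0 < b i) (hw : ∀ i, 0 ≤ w i)
    (p q : ℝ) (hp : 0 < p) (hq : 0 < q)
    (hratio : ∀ i, q ≤ a i / b i ∧ a i / b i ≤ p) :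
    Real.sqrt (∑ i, w i * a i ^ 2) * Real.sqrt (∑ i, w i * b i ^ 2) ≤
      (p + q) / (2 * Real.sqrt (p * q)) * ∑ i, w i * a i * b i := by
  set A := ∑ i, w i * a i ^ 2 with hAdef
  set B := ∑ i, w i * b i ^ 2 with hBdef
  set C := ∑ i, w i * a i * b i with hCdef
  have hA : 0 ≤ A := Finset.sum_nonneg fun i _ => mul_nonneg (hw i) (sq_nonneg _)
  have hB : 0 ≤ B := Finset.sum_nonneg fun i _ => mul_nonneg (hw i) (sq_nonneg _)
  have h1 : A + p * q * B ≤ (p + q) * C := by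
    have : ∀ i ∈ Finset.univ, w i * a i ^ 2 + p * q * (w i * b i ^ 2)
        ≤ (p + q) * (w i * a i * b i) := by
      intro i _
      have hbi := hb i
      have h1 : q * b i ≤ a i := (le_div_iff₀ hbi).mp (hratio i).1
      have h2 : a i ≤ p * b i := (div_le_iff₀ hbi).mp (hratio i).2
      have key : 0 ≤ (a i - q * b i) * (p * b i - a i) :=
        mul_nonneg (by linarith) (by linarith)
      nlinarith [hw i, mul_nonneg (hw i) key]
    calc A + p * q * B = ∑ i, (w i * a i ^ 2 + p * q * (w i * b i ^ 2)) := by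
          rw [hAdef, hBdef, Finset.mul_sum, ← Finset.sum_add_distrib]
      _ ≤ ∑ i, (p + q) * (w i * a i * b i) := Finset.sum_le_sum this
      _ = (p + q) * C := by rw [hCdef, Finset.mul_sum]
  have hsP : 0 < Real.sqrt (p * q) := Real.sqrt_pos.mpr (by positivity)
  have hsP2 : Real.sqrt (p * q) ^ 2 = p * q := Real.sq_sqrt (by positivity)
  have hsA2 : Real.sqrt A ^ 2 = A := Real.sq_sqrt hA
  have hsB2 : Real.sqrt B ^ 2 = B := Real.sq_sqrt hB
  rw [div_mul_eq_mul_div, le_div_iff₀ (by positivity)]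
  nlinarith [sq_nonneg (Real.sqrt A - Real.sqrt (p * q) * Real.sqrt B),
    Real.sqrt_nonneg A, Real.sqrt_nonneg B]
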